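/- arXiv:1701.03293 — 2 statements merged into one kernel-verified Lean document; each statement's English description precedes it below -/
import Mathlib

section
/- Let a, b ∈ ℂ with a·b ≠ 0 and |a| ≠ |b|, let φ be the 2×2 complex matrix with rows (0, a) and (b, 0), and let φᴴ be its conjugate transpose. If M is a 2×2 complex matrix with Tr(M) = 0 which commutes with both φ and φᴴ, then M = 0. -/
/-!
Commuting with `φ = !![0, a; b, 0]`, which is nonzero as `|a| ≠ |b|`, forces `M` to have equal diagonal entries (hence zero ones, as
`M` is traceless) and off-diagonal entries with `b * M 0 1 = a * M 1 0`. Since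
`φᴴ = !![0, conj b; conj a, 0]`, commuting with `φᴴ` adds `conj a * M 0 1 = conj b * M 1 0`, and
this 2×2 linear system has determinant `|b|² - |a|² ≠ 0`.
-/

open Matrix ComplexConjugate

namespace Matrix

theorem conjTranspose_antidiag_fin_two {α : Type*} [AddMonoid α] [StarAddMonoid α] (a b : α) :
    (!![0, a; b, 0])ᴴ = !![0, star b; star a, 0] := by
  ext i j
  fin_cases i <;> fin_cases j <;> simp

theorem commute_antidiag_fin_two_iff {R : Type*} [CommRing R] {a b : R}
    {M : Matrix (Fin 2) (Fin 2) R} :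
    Commute M !![0, a; b, 0] ↔
      a * M 0 0 = a * M 1 1 ∧ b * M 0 0 = b * M 1 1 ∧ b * M 0 1 = a * M 1 0 := by
  rw [eta_fin_two M, Commute, SemiconjBy, mul_fin_two, mul_fin_two, ← Matrix.ext_iff]
  simp only [Fin.isValue, mul_zero, zero_add, add_zero, of_apply, cons_val', cons_val_fin_one,
    zero_mul, Fin.forall_fin_two, cons_val_zero, cons_val_one]
  grind

theorem diag_eq_of_commute_antidiag_fin_two {R : Type*} [CommRing R] [IsDomain R] {a b : R}
    (hab : a ≠ 0 ∨ b ≠ 0) {M : Matrix (Fin 2) (Fin 2) R} (h : Commute M !![0, a; b, 0]) :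
    M 0 0 = M 1 1 := by
  obtain ⟨ha, hb, -⟩ := commute_antidiag_fin_two_iff.mp h
  rcases hab with hab | hab
  · exact mul_left_cancel₀ hab ha
  · exact mul_left_cancel₀ hab hb

end Matrix

namespace RCLike

theorem eq_zero_of_mul_eq_of_conj_mul_eq {𝕜 : Type*} [RCLike 𝕜] {a b x y : 𝕜}
    (hab : ‖a‖ ≠ ‖b‖) (h : b * x = a * y) (hconj : conj a * x = conj b * y) :
    x = 0 ∧ y = 0 := by
  have hdet : (‖a‖ ^ 2 - ‖b‖ ^ 2 : 𝕜) ≠ 0 := by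
    rw [sub_ne_zero]
    exact_mod_cast (pow_left_inj₀ (norm_nonneg a) (norm_nonneg b) two_ne_zero).not.mpr hab
  have hx : (‖a‖ ^ 2 - ‖b‖ ^ 2 : 𝕜) * x = 0 := by
    linear_combination a * hconj - conj b * h - x * mul_conj a + x * mul_conj b
  have hy : (‖a‖ ^ 2 - ‖b‖ ^ 2 : 𝕜) * y = 0 := by
    linear_combination b * hconj - conj a * h - y * mul_conj a + y * mul_conj b
  exact ⟨(mul_eq_zero.mp hx).resolve_left hdet, (mul_eq_zero.mp hy).resolve_left hdet⟩

end RCLike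

theorem traceless_commuting_with_phi_and_phiH_eq_zero_general (a b : ℂ)
    (habs : ‖a‖ ≠ ‖b‖)
    (M : Matrix (Fin 2) (Fin 2) ℂ) (htr : trace M = 0)
    (hcomm : M * !![0, a; b, 0] = !![0, a; b, 0] * M)
    (hcommH : M * (!![0, a; b, 0])ᴴ = (!![0, a; b, 0])ᴴ * M) :
    M = 0 := by
  have hab : a ≠ 0 ∨ b ≠ 0 := by
    contrapose! habs
    simp [habs.1, habs.2]
  rw [conjTranspose_antidiag_fin_two] at hcommH
  have hdiag : M 0 0 = M 1 1 := diag_eq_of_commute_antidiag_fin_two hab hcomm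
  have h00 : M 0 0 = 0 := by
    rw [trace_fin_two] at htr
    linear_combination (htr + hdiag) / 2
  obtain ⟨-, -, hoff⟩ := commute_antidiag_fin_two_iff.mp hcomm
  obtain ⟨-, -, hoffH⟩ := commute_antidiag_fin_two_iff.mp hcommH
  obtain ⟨h01, h10⟩ := RCLike.eq_zero_of_mul_eq_of_conj_mul_eq habs hoff hoffH
  rw [eta_fin_two M, ← hdiag, h00, h01, h10]
  ext i j
  fin_cases i <;> fin_cases j <;> rfl

/-- If `φ = !![0,a;b,0]` with `a·b ≠ 0` and `|a| ≠ |b|`, and a traceless 2×2 complex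
matrix `M` commutes with both `φ` and `φᴴ`, then `M = 0`. -/
theorem traceless_commuting_with_phi_and_phiH_eq_zero (a b : ℂ)
    (hab : a * b ≠ 0) (habs : ‖a‖ ≠ ‖b‖)
    (M : Matrix (Fin 2) (Fin 2) ℂ) (htr : trace M = 0)
    (hcomm : M * !![0, a; b, 0] = !![0, a; b, 0] * M)
    (hcommH : M * (!![0, a; b, 0])ᴴ = (!![0, a; b, 0])ᴴ * M) :
    M = 0 :=
  traceless_commuting_with_phi_and_phiH_eq_zero_general a b habs M htr hcomm hcommH
end

section
/- Let a, b ∈ ℂ with a·b ≠ 0 and let φ be the 2×2 complex matrix with rows (0, a) and (b, 0). Then there exists a constant C > 0 such that every 2×2 complex matrix M with Tr(M) = 0 and Tr(M·φᴴ) = 0 satisfies ‖[φ, M]‖ ≥ C·‖M‖, where ‖·‖ is the Frobenius norm and [X,Y] = XY − YX. -/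
/-!
Write `M = !![x, y; z, -x]`. Then `[φ, M] = !![a z - b y, -2 a x; 2 b x, b y - a z]`, and
the Lagrange-type identity `|a z - b y|² + |ā y + b̄ z|² = (|a|² + |b|²)(|y|² + |z|²)`,
whose second term is exactly the orthogonality condition `Tr(M φᴴ) = 0`, gives the equality
`‖[φ, M]‖² = 2(|a|² + |b|²)‖M‖²`; so `C = √(2(|a|² + |b|²))` works.
-/

open Matrix ComplexConjugate Complex

theorem Matrix.re_trace_mul_conjTranspose_self {m n : Type*} [Fintype m] [Fintype n]
    (M : Matrix m n ℂ) : (trace (M * Mᴴ)).re = ∑ i, ∑ j, normSq (M i j) := by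
  simp only [trace, diag_apply, mul_apply, conjTranspose_apply, star_def, mul_conj, re_sum,
    ofReal_re]

theorem Complex.normSq_mul_sub_add_normSq_conj_mul_add (a b y z : ℂ) :
    normSq (a * z - b * y) + normSq (conj a * y + conj b * z) =
      (normSq a + normSq b) * (normSq y + normSq z) := by
  apply ofReal_injective
  push_cast [← mul_conj, map_sub, map_add, map_mul, conj_conj]
  ring

theorem Matrix.antidiag_commutator_fin_two {R : Type*} [CommRing R] (a b : R)
    (M : Matrix (Fin 2) (Fin 2) R) :
    !![0, a; b, 0] * M - M * !![0, a; b, 0] =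
      !![a * M 1 0 - b * M 0 1, a * (M 1 1 - M 0 0);
        b * (M 0 0 - M 1 1), b * M 0 1 - a * M 1 0] := by
  ext i j
  fin_cases i <;> fin_cases j <;>
    simp [mul_apply, Fin.sum_univ_two, vecMul, dotProduct] <;> ring

theorem Matrix.re_trace_antidiag_commutator_mul_conjTranspose (a b : ℂ)
    (M : Matrix (Fin 2) (Fin 2) ℂ)
    (htr : trace M = 0) (horth : trace (M * (!![0, a; b, 0])ᴴ) = 0) :
    (trace ((!![0, a; b, 0] * M - M * !![0, a; b, 0]) *
      (!![0, a; b, 0] * M - M * !![0, a; b, 0])ᴴ)).re =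
      2 * (normSq a + normSq b) * (trace (M * Mᴴ)).re := by
  have hdiag : M 1 1 = -M 0 0 := by
    rw [trace_fin_two] at htr; linear_combination htr
  have hoff : conj a * M 0 1 + conj b * M 1 0 = 0 := by
    simpa [trace_fin_two, mul_apply, Fin.sum_univ_two, mul_comm] using horth
  have hlagrange := normSq_mul_sub_add_normSq_conj_mul_add a b (M 0 1) (M 1 0)
  rw [hoff, normSq_zero, add_zero] at hlagrange
  rw [antidiag_commutator_fin_two, re_trace_mul_conjTranspose_self,
    re_trace_mul_conjTranspose_self]
  have hdiff : normSq (M 0 0 - M 1 1) = 4 * normSq (M 0 0) := by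
    rw [hdiag, sub_neg_eq_add, ← two_mul, normSq_mul]; norm_num
  have hdiff' : normSq (M 1 1 - M 0 0) = 4 * normSq (M 0 0) := by
    rw [← normSq_neg, neg_sub, hdiff]
  have hanti : normSq (b * M 0 1 - a * M 1 0) = normSq (a * M 1 0 - b * M 0 1) := by
    rw [← normSq_neg, neg_sub]
  simp only [Fin.sum_univ_two, of_apply, cons_val', cons_val_zero, cons_val_one, empty_val',
    cons_val_fin_one, normSq_mul, hdiff, hdiff', hanti, hlagrange]
  rw [hdiag, normSq_neg]
  ring

/-- For `φ = !![0,a;b,0]` with `a·b ≠ 0` there is `C > 0` such that every traceless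
2×2 complex matrix `M` orthogonal to `φ` (i.e. `Tr(M·φᴴ) = 0`) satisfies
`‖[φ,M]‖ ≥ C·‖M‖` in the Frobenius norm `‖X‖ = √(Tr(X Xᴴ))`. -/
theorem bracket_coercive_on_orthogonal_complement (a b : ℂ) (hab : a * b ≠ 0) :
    ∃ C > (0 : ℝ), ∀ M : Matrix (Fin 2) (Fin 2) ℂ,
      trace M = 0 → trace (M * (!![0, a; b, 0])ᴴ) = 0 →
      C * Real.sqrt (trace (M * Mᴴ)).re ≤
        Real.sqrt (trace ((!![0, a; b, 0] * M - M * !![0, a; b, 0]) *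
          (!![0, a; b, 0] * M - M * !![0, a; b, 0])ᴴ)).re := by
  have hk : 0 < 2 * (normSq a + normSq b) := mul_pos two_pos <|
    add_pos_of_pos_of_nonneg (normSq_pos.mpr (left_ne_zero_of_mul hab)) (normSq_nonneg b)
  refine ⟨Real.sqrt (2 * (normSq a + normSq b)), Real.sqrt_pos.mpr hk, fun M htr horth => ?_⟩
  rw [re_trace_antidiag_commutator_mul_conjTranspose a b M htr horth, Real.sqrt_mul hk.le]
end
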